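/- Let μ be a compactly supported Borel probability measure on ℝ^d, let B ⊂ ℝ^d be a finite set, let ν be a probability distribution on B, let c : ℝ^d × ℝ^d → ℝ≥0 be a continuous ground cost, and let δ > 0. Let P be a finite measurable partition of ℝ^d, with a representative point r(ϱ) ∈ ϱ in each part ϱ, such that for every part ϱ, any two points x, y ∈ ϱ have the same weighted nearest neighbors with respect to every weight function w : B → ℝ whose values are nonnegative integer multiples of δ. Let y : B → ℝ be dual weights whose values are nonnegative integer multiples of δ, and for each part ϱ define y_δ(r(ϱ)) = max_{b'∈B}( y(b') − c(r(ϱ), b') ) − δ. Suppose τ is a transport plan from μ to ν that is δ-optimal with respect to y, i.e., for every part ϱ ∈ P and every b ∈ B: y(b) − y_δ(r(ϱ)) ≤ c(r(ϱ), b) + δ, and y(b) − y_δ(r(ϱ)) ≥ c(r(ϱ), b) whenever τ_b(ϱ) > 0. Then for every transport plan τ' from μ to ν, ¢(τ) ≤ ¢(τ') + δ. -/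

import Mathlib

open MeasureTheory
open scoped ENNReal

noncomputable section

def IsSemiDiscretePlan {d : ℕ} (μ : Measure (EuclideanSpace ℝ (Fin d)))
    (B : Finset (EuclideanSpace ℝ (Fin d))) (ν : EuclideanSpace ℝ (Fin d) → ℝ≥0∞)
    (τ : EuclideanSpace ℝ (Fin d) → Measure (EuclideanSpace ℝ (Fin d))) : Prop :=
  (∑ b ∈ B, τ b) = μ ∧ ∀ b ∈ B, τ b Set.univ = ν b

def planCost {d : ℕ} (c : EuclideanSpace ℝ (Fin d) → EuclideanSpace ℝ (Fin d) → ℝ)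
    (B : Finset (EuclideanSpace ℝ (Fin d)))
    (τ : EuclideanSpace ℝ (Fin d) → Measure (EuclideanSpace ℝ (Fin d))) : ℝ :=
  ∑ b ∈ B, ∫ x, c x b ∂(τ b)

/-!
With `φ x = min_{b'} (c x b' - y b')`, every plan `τ'` satisfies `¢(τ') ≥ ∫ φ dμ + ∑ y(b) ν(b)` (weak duality). Conversely, if `τ_b(ϱ) > 0` then
tightness at `r ϱ` says that `b` is a weighted nearest neighbor of `r ϱ` for the weights `y`
raised by `δ` at `b`; these weights are still multiples of `δ`, so `b` stays a weighted nearest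
neighbor of every `x ∈ ϱ`, i.e. `c x b ≤ φ x + y b + δ`. Integrating this `τ_b`-almost
everywhere gives `¢(τ) ≤ ∫ φ dμ + ∑ y(b) ν(b) + δ`.
-/

open Finset Function

theorem sub_sub_le_inf'_of_sup'_le {ι : Type*} {B : Finset ι} (hB : B.Nonempty) {c y : ι → ℝ}
    {δ : ℝ} {b : ι} (h : B.sup' hB (fun b' => y b' - c b') ≤ y b - c b + δ) :
    c b - y b - δ ≤ B.inf' hB (fun b' => c b' - y b') :=
  le_inf' hB _ fun b' hb' => by linarith [le_sup' (fun b' => y b' - c b') hb']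

theorem sub_update_eq_inf'_iff {ι : Type*} [DecidableEq ι] {B : Finset ι} (hB : B.Nonempty)
    {c y : ι → ℝ} {δ : ℝ} {b : ι} (hδ : 0 ≤ δ) (hb : b ∈ B) :
    c b - update y b (y b + δ) b = B.inf' hB (fun b' => c b' - update y b (y b + δ) b') ↔
      c b - y b - δ ≤ B.inf' hB (fun b' => c b' - y b') := by
  rw [eq_comm, le_antisymm_iff, and_iff_right (inf'_le _ hb), le_inf'_iff, le_inf'_iff]
  refine forall₂_congr fun b' _ => ?_
  rcases eq_or_ne b' b with rfl | hne
  · simp only [update_self]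
    constructor <;> intro <;> linarith
  · rw [update_self, update_of_ne hne, sub_add_eq_sub_sub]

theorem exists_nat_mul_update_add {ι : Type*} [DecidableEq ι] {B : Finset ι} {y : ι → ℝ}
    {δ : ℝ} (hy : ∀ b ∈ B, ∃ k : ℕ, y b = k * δ) {b : ι} (hb : b ∈ B) :
    ∀ b' ∈ B, ∃ k : ℕ, update y b (y b + δ) b' = k * δ := by
  intro b' hb'
  obtain ⟨k, hk⟩ := hy b' hb'
  rcases eq_or_ne b' b with rfl | hne
  · exact ⟨k + 1, by simp [hk, add_mul]⟩
  · exact ⟨k, by rw [update_of_ne hne, hk]⟩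

theorem ae_of_forall_mem_of_measure_ne_zero {X : Type*} [MeasurableSpace X] {m : Measure X}
    {P : Finset (Set X)} (hP : ⋃₀ (P : Set (Set X)) = Set.univ) {p : X → Prop}
    (h : ∀ ϱ ∈ P, m ϱ ≠ 0 → ∀ x ∈ ϱ, p x) : ∀ᵐ x ∂m, p x := by
  have hnull : ∀ᵐ x ∂m, ∀ ϱ ∈ P.filter (m · = 0), x ∉ ϱ :=
    (Filter.eventually_all_finset _).2 fun ϱ hϱ =>
      measure_eq_zero_iff_ae_notMem.1 (mem_filter.1 hϱ).2
  filter_upwards [hnull] with x hx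
  obtain ⟨ϱ, hϱP, hxϱ⟩ := Set.sUnion_eq_univ_iff.1 hP x
  exact h ϱ hϱP (fun h0 => hx ϱ (mem_filter.2 ⟨hϱP, h0⟩) hxϱ) x hxϱ

theorem Continuous.integrable_of_isCompact_null_compl {X : Type*} [TopologicalSpace X]
    [T2Space X] [MeasurableSpace X] [OpensMeasurableSpace X] {μ : Measure X} [IsFiniteMeasure μ]
    {K : Set X} (hK : IsCompact K) (hμK : μ Kᶜ = 0) {f : X → ℝ} (hf : Continuous f) :
    Integrable f μ := by
  rw [← Measure.restrict_eq_self_of_ae_mem (μ := μ) (ae_iff.2 hμK)]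
  exact hf.continuousOn.integrableOn_compact hK

section SemiDiscretePlan

variable {d : ℕ} {μ : Measure (EuclideanSpace ℝ (Fin d))} {B : Finset (EuclideanSpace ℝ (Fin d))}
  {ν : EuclideanSpace ℝ (Fin d) → ℝ≥0∞}
  {τ : EuclideanSpace ℝ (Fin d) → Measure (EuclideanSpace ℝ (Fin d))}

theorem IsSemiDiscretePlan.le (hτ : IsSemiDiscretePlan μ B ν τ) {b : EuclideanSpace ℝ (Fin d)}
    (hb : b ∈ B) : τ b ≤ μ :=
  hτ.1 ▸ single_le_sum (fun _ _ => Measure.zero_le _) hb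

variable [IsFiniteMeasure μ]

theorem IsSemiDiscretePlan.isFiniteMeasure (hτ : IsSemiDiscretePlan μ B ν τ)
    {b : EuclideanSpace ℝ (Fin d)} (hb : b ∈ B) : IsFiniteMeasure (τ b) :=
  isFiniteMeasure_of_le μ (hτ.le hb)

theorem IsSemiDiscretePlan.sum_toReal (hτ : IsSemiDiscretePlan μ B ν τ) :
    ∑ b ∈ B, (ν b).toReal = μ.real Set.univ := by
  have hfin : ∀ b ∈ B, τ b Set.univ ≠ ∞ := fun b hb =>
    have := hτ.isFiniteMeasure hb
    measure_ne_top _ _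
  rw [← sum_congr rfl fun b hb => congrArg ENNReal.toReal (hτ.2 b hb), ← ENNReal.toReal_sum hfin,
    ← Measure.finsetSum_apply, hτ.1, measureReal_def]

theorem IsSemiDiscretePlan.sum_integral_add_const (hτ : IsSemiDiscretePlan μ B ν τ)
    {φ : EuclideanSpace ℝ (Fin d) → ℝ} (hφ : Integrable φ μ) (a : EuclideanSpace ℝ (Fin d) → ℝ) :
    ∑ b ∈ B, ∫ x, φ x + a b ∂τ b = ∫ x, φ x ∂μ + ∑ b ∈ B, a b * (ν b).toReal := by
  rw [← hτ.1, integral_finsetSum_measure fun b hb => hφ.mono_measure (hτ.le hb),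
    ← sum_add_distrib]
  refine sum_congr rfl fun b hb => ?_
  have := hτ.isFiniteMeasure hb
  rw [integral_add (hφ.mono_measure (hτ.le hb)) (integrable_const _), integral_const,
    measureReal_def, hτ.2 b hb, smul_eq_mul, mul_comm]

theorem IsSemiDiscretePlan.planCost_le (hτ : IsSemiDiscretePlan μ B ν τ)
    {φ : EuclideanSpace ℝ (Fin d) → ℝ} (hφ : Integrable φ μ)
    {c : EuclideanSpace ℝ (Fin d) → EuclideanSpace ℝ (Fin d) → ℝ}
    (hc : ∀ b ∈ B, Integrable (c · b) μ) {a : EuclideanSpace ℝ (Fin d) → ℝ}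
    (h : ∀ b ∈ B, ∀ᵐ x ∂τ b, c x b ≤ φ x + a b) :
    planCost c B τ ≤ ∫ x, φ x ∂μ + ∑ b ∈ B, a b * (ν b).toReal := by
  rw [← hτ.sum_integral_add_const hφ]
  exact sum_le_sum fun b hb => integral_mono_ae ((hc b hb).mono_measure (hτ.le hb))
    ((hφ.add (integrable_const (a b))).mono_measure (hτ.le hb)) (h b hb)

theorem IsSemiDiscretePlan.le_planCost (hτ : IsSemiDiscretePlan μ B ν τ)
    {φ : EuclideanSpace ℝ (Fin d) → ℝ} (hφ : Integrable φ μ)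
    {c : EuclideanSpace ℝ (Fin d) → EuclideanSpace ℝ (Fin d) → ℝ}
    (hc : ∀ b ∈ B, Integrable (c · b) μ) {a : EuclideanSpace ℝ (Fin d) → ℝ}
    (h : ∀ b ∈ B, ∀ᵐ x ∂τ b, φ x + a b ≤ c x b) :
    ∫ x, φ x ∂μ + ∑ b ∈ B, a b * (ν b).toReal ≤ planCost c B τ := by
  rw [← hτ.sum_integral_add_const hφ]
  exact sum_le_sum fun b hb => integral_mono_ae
    ((hφ.add (integrable_const (a b))).mono_measure (hτ.le hb))
    ((hc b hb).mono_measure (hτ.le hb)) (h b hb)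

end SemiDiscretePlan

theorem delta_optimal_plan_is_delta_close_general {d : ℕ}
    (μ : Measure (EuclideanSpace ℝ (Fin d))) [IsProbabilityMeasure μ]
    (hμc : ∃ K : Set (EuclideanSpace ℝ (Fin d)), IsCompact K ∧ μ Kᶜ = 0)
    (B : Finset (EuclideanSpace ℝ (Fin d))) (hB : B.Nonempty)
    (ν : EuclideanSpace ℝ (Fin d) → ℝ≥0∞)
    (c : EuclideanSpace ℝ (Fin d) → EuclideanSpace ℝ (Fin d) → ℝ)
    (hccont : Continuous fun p : EuclideanSpace ℝ (Fin d) × EuclideanSpace ℝ (Fin d) =>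
      c p.1 p.2)
    (δ : ℝ) (hδ : 0 < δ)
    -- `P` is a finite measurable partition of `ℝ^d`:
    (P : Finset (Set (EuclideanSpace ℝ (Fin d))))
    (hPcover : ⋃₀ (P : Set (Set (EuclideanSpace ℝ (Fin d)))) = Set.univ)
    -- representative points:
    (r : Set (EuclideanSpace ℝ (Fin d)) → EuclideanSpace ℝ (Fin d))
    (hr : ∀ ϱ ∈ P, r ϱ ∈ ϱ)
    -- any two points of a part have the same weighted nearest neighbors for every weight
    -- function whose values are nonnegative integer multiples of `δ`:
    (hP : ∀ ϱ ∈ P, ∀ x ∈ ϱ, ∀ y' ∈ ϱ,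
      ∀ w : EuclideanSpace ℝ (Fin d) → ℝ,
        (∀ b ∈ B, ∃ k : ℕ, w b = (k : ℝ) * δ) → ∀ b ∈ B,
          (c x b - w b = B.inf' hB (fun b' => c x b' - w b') ↔
           c y' b - w b = B.inf' hB (fun b' => c y' b' - w b')))
    -- the dual weights on `B`:
    (y : EuclideanSpace ℝ (Fin d) → ℝ)
    (hy : ∀ b ∈ B, ∃ k : ℕ, y b = (k : ℝ) * δ)
    -- the transport plan, `δ`-optimal with respect to `y` and the induced duals
    -- `y_δ(r ϱ) = max_{b' ∈ B} (y b' - c (r ϱ) b') - δ`: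
    (τ : EuclideanSpace ℝ (Fin d) → Measure (EuclideanSpace ℝ (Fin d)))
    (hτ : IsSemiDiscretePlan μ B ν τ)
    (htight : ∀ ϱ ∈ P, ∀ b ∈ B, τ b ϱ ≠ 0 →
      y b - (B.sup' hB (fun b' => y b' - c (r ϱ) b') - δ) ≥ c (r ϱ) b) :
    ∀ τ' : EuclideanSpace ℝ (Fin d) → Measure (EuclideanSpace ℝ (Fin d)),
      IsSemiDiscretePlan μ B ν τ' → planCost c B τ ≤ planCost c B τ' + δ := by
  classical
  intro τ' hτ'
  obtain ⟨K, hK, hμK⟩ := hμc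
  set φ := fun x => B.inf' hB (fun b' => c x b' - y b')
  have hc : ∀ b, Continuous (c · b) := fun b => hccont.comp (.prodMk_left b)
  have hφ : Integrable φ μ := (Continuous.finset_inf'_apply hB fun b _ =>
    (hc b).sub continuous_const).integrable_of_isCompact_null_compl hK hμK
  have hcμ : ∀ b ∈ B, Integrable (c · b) μ := fun b _ =>
    (hc b).integrable_of_isCompact_null_compl hK hμK
  have hnear : ∀ b ∈ B, ∀ᵐ x ∂τ b, c x b ≤ φ x + (y b + δ) := by
    intro b hb
    refine ae_of_forall_mem_of_measure_ne_zero hPcover fun ϱ hϱ hτϱ x hx => ?_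
    have hrb : c (r ϱ) b - y b - δ ≤ φ (r ϱ) :=
      sub_sub_le_inf'_of_sup'_le hB (by linarith [htight ϱ hϱ b hb hτϱ])
    rw [← sub_update_eq_inf'_iff hB hδ.le hb] at hrb
    have hxb := (hP ϱ hϱ _ (hr ϱ hϱ) x hx _ (exists_nat_mul_update_add hy hb) b hb).1 hrb
    linarith [(sub_update_eq_inf'_iff hB hδ.le hb).1 hxb]
  have hupper := hτ.planCost_le hφ hcμ hnear
  have hlower := hτ'.le_planCost hφ hcμ (a := y) fun b hb => .of_forall fun x => by
    linarith [inf'_le (fun b' => c x b' - y b') hb]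
  have hmass : ∑ b ∈ B, (y b + δ) * (ν b).toReal = ∑ b ∈ B, y b * (ν b).toReal + δ := by
    simp only [add_mul, sum_add_distrib, ← mul_sum, hτ.sum_toReal, probReal_univ, mul_one]
  linarith

/-- A `δ`-optimal transport plan (with respect to dual weights `y` on `B` and the induced
dual weights `y_δ(r ϱ) = max_{b'}(y b' - c (r ϱ) b') - δ` on the representatives of the
parts of the arrangement `P`) is `δ`-close: `¢(τ) ≤ ¢(τ') + δ` for every plan `τ'`. -/
theorem delta_optimal_plan_is_delta_close {d : ℕ}
    (μ : Measure (EuclideanSpace ℝ (Fin d))) [IsProbabilityMeasure μ]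
    (hμc : ∃ K : Set (EuclideanSpace ℝ (Fin d)), IsCompact K ∧ μ Kᶜ = 0)
    (B : Finset (EuclideanSpace ℝ (Fin d))) (hB : B.Nonempty)
    (ν : EuclideanSpace ℝ (Fin d) → ℝ≥0∞) (hν : ∑ b ∈ B, ν b = 1)
    (c : EuclideanSpace ℝ (Fin d) → EuclideanSpace ℝ (Fin d) → ℝ)
    (hc0 : ∀ x y, 0 ≤ c x y)
    (hccont : Continuous fun p : EuclideanSpace ℝ (Fin d) × EuclideanSpace ℝ (Fin d) =>
      c p.1 p.2)
    (δ : ℝ) (hδ : 0 < δ)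
    -- `P` is a finite measurable partition of `ℝ^d`:
    (P : Finset (Set (EuclideanSpace ℝ (Fin d))))
    (hPmeas : ∀ ϱ ∈ P, MeasurableSet ϱ)
    (hPdisj : ∀ ϱ₁ ∈ P, ∀ ϱ₂ ∈ P, ϱ₁ ≠ ϱ₂ → Disjoint ϱ₁ ϱ₂)
    (hPcover : ⋃₀ (P : Set (Set (EuclideanSpace ℝ (Fin d)))) = Set.univ)
    -- representative points:
    (r : Set (EuclideanSpace ℝ (Fin d)) → EuclideanSpace ℝ (Fin d))
    (hr : ∀ ϱ ∈ P, r ϱ ∈ ϱ)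
    -- any two points of a part have the same weighted nearest neighbors for every weight
    -- function whose values are nonnegative integer multiples of `δ`:
    (hP : ∀ ϱ ∈ P, ∀ x ∈ ϱ, ∀ y' ∈ ϱ,
      ∀ w : EuclideanSpace ℝ (Fin d) → ℝ,
        (∀ b ∈ B, ∃ k : ℕ, w b = (k : ℝ) * δ) → ∀ b ∈ B,
          (c x b - w b = B.inf' hB (fun b' => c x b' - w b') ↔
           c y' b - w b = B.inf' hB (fun b' => c y' b' - w b')))
    -- the dual weights on `B`:
    (y : EuclideanSpace ℝ (Fin d) → ℝ)
    (hy : ∀ b ∈ B, ∃ k : ℕ, y b = (k : ℝ) * δ)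
    -- the transport plan, `δ`-optimal with respect to `y` and the induced duals
    -- `y_δ(r ϱ) = max_{b' ∈ B} (y b' - c (r ϱ) b') - δ`:
    (τ : EuclideanSpace ℝ (Fin d) → Measure (EuclideanSpace ℝ (Fin d)))
    (hτ : IsSemiDiscretePlan μ B ν τ)
    (hfeas : ∀ ϱ ∈ P, ∀ b ∈ B,
      y b - (B.sup' hB (fun b' => y b' - c (r ϱ) b') - δ) ≤ c (r ϱ) b + δ)
    (htight : ∀ ϱ ∈ P, ∀ b ∈ B, τ b ϱ ≠ 0 →
      y b - (B.sup' hB (fun b' => y b' - c (r ϱ) b') - δ) ≥ c (r ϱ) b) :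
    ∀ τ' : EuclideanSpace ℝ (Fin d) → Measure (EuclideanSpace ℝ (Fin d)),
      IsSemiDiscretePlan μ B ν τ' → planCost c B τ ≤ planCost c B τ' + δ :=
  delta_optimal_plan_is_delta_close_general μ hμc B hB ν c hccont δ hδ P hPcover r hr hP y hy τ hτ
    htight

end
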